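/- Let α₂(t) = 1 − e^{2πit}, t ∈ [0,1], be the loop in ℂ \ {−1,1} based at 0 that surrounds 1 counterclockwise. For every k ∈ ℤ, the unique lift γ of α₂ under the covering map f = f₁ ∘ f₂ with initial point γ(0) = −i/2 + ik satisfies: γ(1) = −i/2 + i(k−1), the image of γ is contained in the closed right half-plane {z : Re z ≥ 0}, and Re γ(t) = 0 only for t = 0 and t = 1. -/

import Mathlib

open Complex unitInterval

/-- The set `iℤ = {i·m : m ∈ ℤ}` of integer multiples of `i`. -/
def intMulI : Set ℂ := {z : ℂ | ∃ m : ℤ, z = Complex.I * (m : ℂ)}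

/-- `f₂(z) = (e^{πz} − 1)/(e^{πz} + 1)`. -/
noncomputable def fTwo (z : ℂ) : ℂ :=
  (Complex.exp (Real.pi * z) - 1) / (Complex.exp (Real.pi * z) + 1)

/-- `f₁(w) = (1/2)(w + 1/w)`. -/
noncomputable def fOne (w : ℂ) : ℂ := (w + w⁻¹) / 2

/-- The covering map `f = f₁ ∘ f₂` from `ℂ \ iℤ` onto `ℂ \ {−1,1}`. -/
noncomputable def fCov (z : ℂ) : ℂ := fOne (fTwo z)

/-- The loop `α₂(t) = 1 − e^{2πit}` in `ℂ \ {−1,1}` based at `0`,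
surrounding `1` counterclockwise. -/
noncomputable def alphaTwo (t : ℝ) : ℂ := 1 - Complex.exp (2 * Real.pi * Complex.I * t)

/-!
Away from `iℤ` the covering map is `f(z) = coth(πz) = (e^{2πz} + 1)/(e^{2πz} − 1)`, so `f(z) = w`
iff `e^{2πz} = (w + 1)/(w − 1)`, and two points of `ℂ \ iℤ` with the same image differ by an
element of `iℤ`. For `w = α₂(t)` the right-hand side is `1 − 2e^{−2πit} = −e^{−2πit}(2 − e^{2πit})`,
and `2 − e^{2πit}` has positive real part, so
`γ(t) = i(k − 1/2 − t) + log(2 − e^{2πit})/(2π)` is a continuous lift starting at `−i/2 + ik`.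
It is the only one, since the difference of two lifts is a continuous map into the discrete set
`iℤ`. Finally `Re γ(t) = log |2 − e^{2πit}| / (2π) ≥ 0`, with equality only where `e^{2πit} = 1`.
-/

open scoped Real

lemma intMulI_eq_zmultiples : intMulI = AddSubgroup.zmultiples Complex.I := by
  ext z
  simp only [intMulI, Set.mem_ofPred_eq, SetLike.mem_coe, AddSubgroup.mem_zmultiples_iff,
    zsmul_eq_mul, mul_comm Complex.I, eq_comm]

lemma isDiscrete_intMulI : IsDiscrete intMulI := by
  rw [intMulI_eq_zmultiples, isDiscrete_iff_discreteTopology]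
  exact NormedSpace.discreteTopology_zmultiples _

lemma exp_two_pi_mul_eq_one_iff {z : ℂ} : exp (2 * π * z) = 1 ↔ z ∈ intMulI := by
  have hπ : (2 * π : ℂ) ≠ 0 := by exact_mod_cast Real.two_pi_pos.ne'
  simp only [exp_eq_one_iff, intMulI, Set.mem_ofPred_eq]
  refine exists_congr fun n ↦ ⟨fun h ↦ mul_left_cancel₀ hπ ?_, fun h ↦ ?_⟩
  · linear_combination h
  · rw [h]; ring

lemma eq_of_sub_mem_intMulI {X : Type*} [TopologicalSpace X] [PreconnectedSpace X]
    {g h : X → ℂ} (hg : Continuous g) (hh : Continuous h) (hsub : ∀ x, g x - h x ∈ intMulI)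
    {x₀ : X} (h₀ : g x₀ = h x₀) : g = h := by
  funext x
  have := isPreconnected_univ.constant_of_mapsTo isDiscrete_intMulI (hg.sub hh).continuousOn
    (fun x _ ↦ hsub x) (Set.mem_univ x) (Set.mem_univ x₀)
  simpa [h₀, sub_eq_zero] using this

lemma fCov_eq_of_notMem_intMulI {z : ℂ} (hz : z ∉ intMulI) :
    fCov z = (exp (2 * π * z) + 1) / (exp (2 * π * z) - 1) := by
  rw [← exp_two_pi_mul_eq_one_iff] at hz
  have hsq : exp (2 * π * z) = exp (π * z) ^ 2 := by rw [← exp_nat_mul]; ring_nf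
  rw [hsq] at hz ⊢
  have hu₁ : exp (π * z) - 1 ≠ 0 := fun h ↦ hz (by rw [sub_eq_zero.1 h, one_pow])
  have hu₂ : exp (π * z) + 1 ≠ 0 := fun h ↦ hz (by rw [eq_neg_of_add_eq_zero_left h]; ring)
  simp only [fCov, fOne, fTwo]
  field_simp
  ring

lemma sub_mem_intMulI_of_fCov_eq {z₁ z₂ : ℂ} (h₁ : z₁ ∉ intMulI) (h₂ : z₂ ∉ intMulI)
    (h : fCov z₁ = fCov z₂) : z₁ - z₂ ∈ intMulI := by
  rw [fCov_eq_of_notMem_intMulI h₁, fCov_eq_of_notMem_intMulI h₂] at h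
  rw [← exp_two_pi_mul_eq_one_iff] at h₁ h₂ ⊢
  rw [div_eq_div_iff (sub_ne_zero.2 h₁) (sub_ne_zero.2 h₂)] at h
  have hexp : exp (2 * π * z₁) = exp (2 * π * z₂) := by linear_combination -h / 2
  rw [mul_sub, exp_sub, hexp, div_self (exp_ne_zero _)]

lemma norm_exp_two_pi_I_mul (t : ℝ) : ‖exp (2 * π * Complex.I * t)‖ = 1 := by
  rw [show 2 * π * Complex.I * t = ((2 * π * t : ℝ) : ℂ) * Complex.I by push_cast; ring]
  exact norm_exp_ofReal_mul_I _

lemma eq_zero_or_eq_one_of_exp_two_pi_I_mul_eq_one {t : ℝ} (ht : t ∈ Set.Icc (0 : ℝ) 1)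
    (h : exp (2 * π * Complex.I * t) = 1) : t = 0 ∨ t = 1 := by
  obtain ⟨n, hn⟩ := exp_eq_one_iff.1 h
  have hπ : (2 * π * Complex.I : ℂ) ≠ 0 := by simp [Real.pi_ne_zero]
  have htn : (t : ℂ) = n := mul_left_cancel₀ hπ (by linear_combination hn)
  norm_cast at htn
  have : n = 0 ∨ n = 1 := by
    obtain ⟨h0, h1⟩ := ht
    rw [htn] at h0 h1
    have : 0 ≤ n := by exact_mod_cast h0
    have : n ≤ 1 := by exact_mod_cast h1
    omega
  rcases this with rfl | rfl <;> simp [htn]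

lemma one_le_norm_two_sub {w : ℂ} (hw : ‖w‖ ≤ 1) : 1 ≤ ‖2 - w‖ := by
  have := norm_sub_norm_le (2 : ℂ) w
  rw [Complex.norm_two] at this
  linarith

lemma two_sub_mem_slitPlane {w : ℂ} (hw : ‖w‖ ≤ 1) : 2 - w ∈ slitPlane := by
  have := re_le_norm w
  exact mem_slitPlane_iff.2 (Or.inl (by simp only [sub_re, re_ofNat]; linarith))

lemma eq_one_of_norm_two_sub_eq_one {w : ℂ} (hw : ‖w‖ = 1) (h : ‖2 - w‖ = 1) : w = 1 := by
  have hw' : w.re * w.re + w.im * w.im = 1 := by rw [← normSq_apply, normSq_eq_norm_sq, hw, one_pow]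
  have h' : (2 - w.re) * (2 - w.re) + w.im * w.im = 1 := by
    simpa [normSq_apply, h] using normSq_eq_norm_sq (2 - w)
  have hre : w.re = 1 := by linarith
  have him : w.im = 0 := by nlinarith
  exact Complex.ext (by simpa using hre) (by simpa using him)

noncomputable def alphaTwoLift (k : ℤ) (t : ℝ) : ℂ :=
  Complex.I * (((2 * k - 1) / 2 - t : ℝ) : ℂ) + log (2 - exp (2 * π * Complex.I * t)) / (2 * π)

lemma exp_two_pi_mul_alphaTwoLift (k : ℤ) (t : ℝ) :
    exp (2 * π * alphaTwoLift k t) = 1 - 2 / exp (2 * π * Complex.I * t) := by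
  have hπ : (π : ℂ) ≠ 0 := by exact_mod_cast Real.pi_ne_zero
  have harg : 2 * π * alphaTwoLift k t = k * (2 * π * Complex.I) - π * Complex.I
      - 2 * π * Complex.I * t + log (2 - exp (2 * π * Complex.I * t)) := by
    simp only [alphaTwoLift]
    push_cast
    field_simp
  have h2 := two_sub_mem_slitPlane (norm_exp_two_pi_I_mul t).le
  rw [harg, exp_add, exp_sub, exp_sub, exp_int_mul_two_pi_mul_I, exp_pi_mul_I,
    exp_log (slitPlane_ne_zero h2)]
  field_simp
  ring

lemma alphaTwoLift_notMem_intMulI (k : ℤ) (t : ℝ) : alphaTwoLift k t ∉ intMulI := by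
  rw [← exp_two_pi_mul_eq_one_iff, exp_two_pi_mul_alphaTwoLift]
  simp [exp_ne_zero]

lemma fCov_alphaTwoLift (k : ℤ) (t : ℝ) : fCov (alphaTwoLift k t) = alphaTwo t := by
  rw [fCov_eq_of_notMem_intMulI (alphaTwoLift_notMem_intMulI k t), exp_two_pi_mul_alphaTwoLift,
    alphaTwo]
  have := exp_ne_zero (2 * π * Complex.I * t)
  field_simp
  ring

lemma continuous_alphaTwoLift (k : ℤ) : Continuous (alphaTwoLift k) := by
  refine .add (by fun_prop) (.div_const (continuous_iff_continuousAt.2 fun t ↦ ?_) _)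
  exact ContinuousAt.clog (by fun_prop) (two_sub_mem_slitPlane (norm_exp_two_pi_I_mul t).le)

lemma alphaTwoLift_zero (k : ℤ) : alphaTwoLift k 0 = -Complex.I / 2 + Complex.I * k := by
  simp only [alphaTwoLift]
  push_cast
  norm_num
  ring

lemma alphaTwoLift_one (k : ℤ) : alphaTwoLift k 1 = -Complex.I / 2 + Complex.I * (k - 1) := by
  simp only [alphaTwoLift]
  push_cast
  norm_num
  ring

lemma re_alphaTwoLift (k : ℤ) (t : ℝ) :
    (alphaTwoLift k t).re = Real.log ‖2 - exp (2 * π * Complex.I * t)‖ / (2 * π) := by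
  simp [alphaTwoLift, div_re, log_re, normSq]
  field_simp

lemma re_alphaTwoLift_nonneg (k : ℤ) (t : ℝ) : 0 ≤ (alphaTwoLift k t).re := by
  rw [re_alphaTwoLift]
  exact div_nonneg (Real.log_nonneg (one_le_norm_two_sub (norm_exp_two_pi_I_mul t).le))
    Real.two_pi_pos.le

lemma eq_zero_or_eq_one_of_re_alphaTwoLift_eq_zero {k : ℤ} {t : ℝ} (ht : t ∈ Set.Icc (0 : ℝ) 1)
    (h : (alphaTwoLift k t).re = 0) : t = 0 ∨ t = 1 := by
  have hnorm := one_le_norm_two_sub (norm_exp_two_pi_I_mul t).le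
  rw [re_alphaTwoLift, div_eq_zero_iff, or_iff_left Real.two_pi_pos.ne',
    Real.log_eq_zero] at h
  refine eq_zero_or_eq_one_of_exp_two_pi_I_mul_eq_one ht
    (eq_one_of_norm_two_sub_eq_one (norm_exp_two_pi_I_mul t) ?_)
  rcases h with h | h | h <;> linarith

/-- For every `k ∈ ℤ`, the unique lift `γ` of `α₂` under `f = f₁ ∘ f₂` with initial point
`−i/2 + ik` exists, is unique, terminates at `−i/2 + i(k−1)`, has image in the closed right
half-plane, and meets the imaginary axis only at its endpoints. -/
theorem lift_of_alpha_two (k : ℤ) :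
    ∃ γ : I → ℂ,
      (Continuous γ ∧ (∀ t : I, γ t ∉ intMulI) ∧
        (∀ t : I, fCov (γ t) = alphaTwo (t : ℝ)) ∧
        γ 0 = -Complex.I / 2 + Complex.I * (k : ℂ)) ∧
      (∀ γ' : I → ℂ,
        (Continuous γ' ∧ (∀ t : I, γ' t ∉ intMulI) ∧
          (∀ t : I, fCov (γ' t) = alphaTwo (t : ℝ)) ∧
          γ' 0 = -Complex.I / 2 + Complex.I * (k : ℂ)) → γ' = γ) ∧
      γ 1 = -Complex.I / 2 + Complex.I * ((k : ℂ) - 1) ∧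
      (∀ t : I, 0 ≤ (γ t).re) ∧
      (∀ t : I, (γ t).re = 0 → t = 0 ∨ t = 1) := by
  have hγ : Continuous fun t : I ↦ alphaTwoLift k t :=
    (continuous_alphaTwoLift k).comp continuous_subtype_val
  refine ⟨fun t ↦ alphaTwoLift k t, ⟨hγ, fun t ↦ alphaTwoLift_notMem_intMulI k t,
    fun t ↦ fCov_alphaTwoLift k t, alphaTwoLift_zero k⟩, ?_, alphaTwoLift_one k,
    fun t ↦ re_alphaTwoLift_nonneg k t, fun t ht ↦ ?_⟩
  · rintro γ' ⟨hγ'_cont, hγ'_mem, hγ'_lift, hγ'_zero⟩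
    refine eq_of_sub_mem_intMulI hγ'_cont hγ (fun t ↦ sub_mem_intMulI_of_fCov_eq (hγ'_mem t)
      (alphaTwoLift_notMem_intMulI k t) ?_) (x₀ := 0) (hγ'_zero.trans (alphaTwoLift_zero k).symm)
    rw [hγ'_lift, fCov_alphaTwoLift]
  · rcases eq_zero_or_eq_one_of_re_alphaTwoLift_eq_zero t.2 ht with h | h
    exacts [.inl (Subtype.ext h), .inr (Subtype.ext h)]
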